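/- Let f_1, …, f_K : ℝ^d → ℝ each be convex and differentiable with L-Lipschitz gradient, let f := (1/K) Σ_{k=1}^K f_k, and fix x⋆ ∈ ℝ^d. Then for any x, x̃ ∈ ℝ^d, the second moment of the SVRG estimator under uniform sampling of k satisfies (1/K) Σ_{k=1}^K ‖∇f_k(x) − ∇f_k(x̃) + ∇f(x̃) − ∇f(x⋆)‖² ≤ 4L · D_f(x, x⋆) + 4L · D_f(x̃, x⋆), where D_f(x, y) := f(x) − f(y) − ⟨∇f(y), x − y⟩ is the Bregman divergence of f. -/

import Mathlib

open scoped RealInnerProductSpace BigOperators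

section Helpers

variable {F : Type*} [NormedAddCommGroup F] [InnerProductSpace ℝ F] [CompleteSpace F]

private lemma inner_gradient_eq_fderiv {f : F → ℝ} {x : F} (h : DifferentiableAt ℝ f x) (v : F) :
    ⟪gradient f x, v⟫ = fderiv ℝ f x v := by
  have h1 : HasFDerivAt f (InnerProductSpace.toDual ℝ F (gradient f x)) x :=
    hasGradientAt_iff_hasFDerivAt.mp h.hasGradientAt
  rw [h1.fderiv, InnerProductSpace.toDual_apply_apply]

private lemma hasDerivAt_line {f : F → ℝ} (hd : Differentiable ℝ f) (x v : F) (t : ℝ) :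
    HasDerivAt (fun s : ℝ => f (x + s • v)) ⟪gradient f (x + t • v), v⟫ t := by
  have hline : HasDerivAt (fun s : ℝ => x + s • v) v t := by
    simpa using ((hasDerivAt_id t).smul_const v).const_add x
  have := ((hd (x + t • v)).hasFDerivAt).comp_hasDerivAt t hline
  rwa [inner_gradient_eq_fderiv (hd _) v]

/-- Descent lemma for functions with Lipschitz gradient. -/
private lemma descent_lemma {f : F → ℝ} (hd : Differentiable ℝ f) {L : ℝ} (hL : 0 < L)
    (hlip : ∀ a b, ‖gradient f a - gradient f b‖ ≤ L * ‖a - b‖) (x v : F) :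
    f (x + v) ≤ f x + ⟪gradient f x, v⟫ + L / 2 * ‖v‖ ^ 2 := by
  have hgradlip : LipschitzWith (Real.toNNReal L) (gradient f) := by
    apply LipschitzWith.of_dist_le_mul
    intro a b
    rw [dist_eq_norm, dist_eq_norm, Real.coe_toNNReal L hL.le]
    exact hlip a b
  have hgc : Continuous (gradient f) := hgradlip.continuous
  have hφc : Continuous fun t : ℝ => ⟪gradient f (x + t • v), v⟫ :=
    ((hgc.comp (by continuity)).inner continuous_const)
  have hint : f (x + v) - f x = ∫ t in (0:ℝ)..1, ⟪gradient f (x + t • v), v⟫ := by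
    have := intervalIntegral.integral_eq_sub_of_hasDerivAt
      (f := fun s : ℝ => f (x + s • v)) (fun t _ => hasDerivAt_line hd x v t)
      (hφc.intervalIntegrable 0 1)
    simp at this
    rw [← this]; congr 1; funext t; exact (inner_gradient_eq_fderiv (hd _) v).symm
  have hbound : (∫ t in (0:ℝ)..1, ⟪gradient f (x + t • v), v⟫)
      ≤ ∫ t in (0:ℝ)..1, (⟪gradient f x, v⟫ + L * ‖v‖ ^ 2 * t) := by
    apply intervalIntegral.integral_mono_on (by norm_num)
      (hφc.intervalIntegrable 0 1)
      ((by fun_prop : Continuous fun t : ℝ => ⟪gradient f x, v⟫ + L * ‖v‖ ^ 2 * t).intervalIntegrable 0 1)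
    intro t ht
    obtain ⟨ht0, ht1⟩ := Set.mem_Icc.mp ht
    have h1 : ⟪gradient f (x + t • v), v⟫ - ⟪gradient f x, v⟫
        = ⟪gradient f (x + t • v) - gradient f x, v⟫ := (inner_sub_left _ _ _).symm
    have h2 : ⟪gradient f (x + t • v) - gradient f x, v⟫
        ≤ ‖gradient f (x + t • v) - gradient f x‖ * ‖v‖ := real_inner_le_norm _ _
    have h3 : ‖gradient f (x + t • v) - gradient f x‖ ≤ L * (t * ‖v‖) := by
      have := hlip (x + t • v) x
      simpa [norm_smul, abs_of_nonneg ht0] using this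
    nlinarith [norm_nonneg v]
  have hRHS : (∫ t in (0:ℝ)..1, (⟪gradient f x, v⟫ + L * ‖v‖ ^ 2 * t))
      = ⟪gradient f x, v⟫ + L / 2 * ‖v‖ ^ 2 := by
    rw [intervalIntegral.integral_add (intervalIntegrable_const)
      ((by fun_prop : Continuous fun t : ℝ => L * ‖v‖ ^ 2 * t).intervalIntegrable 0 1),
      intervalIntegral.integral_const_mul, integral_id,
      intervalIntegral.integral_const]
    norm_num
    ring
  linarith [hint ▸ hbound.trans_eq hRHS]

/-- First-order condition for convexity. -/
private lemma convex_first_order {f : F → ℝ} (hc : ConvexOn ℝ Set.univ f)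
    (hd : Differentiable ℝ f) (y z : F) :
    f y + ⟪gradient f y, z - y⟫ ≤ f z := by
  set ψ : ℝ → ℝ := fun t => f (y + t • (z - y)) with hψ
  have hψconv : ConvexOn ℝ Set.univ ψ := by
    refine ⟨convex_univ, ?_⟩
    intro t₁ _ t₂ _ a b ha hb hab
    have key : y + (a • t₁ + b • t₂) • (z - y)
        = a • (y + t₁ • (z - y)) + b • (y + t₂ • (z - y)) := by
      have : a • (y + t₁ • (z - y)) + b • (y + t₂ • (z - y))
          = (a + b) • y + (a * t₁ + b * t₂) • (z - y) := by
        rw [smul_add, smul_add, smul_smul, smul_smul, add_smul, add_smul]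
        abel
      rw [this, hab, one_smul]
      simp [smul_eq_mul]
    show f (y + (a • t₁ + b • t₂) • (z - y)) ≤ a * ψ t₁ + b * ψ t₂
    rw [key]
    exact hc.2 (Set.mem_univ _) (Set.mem_univ _) ha hb hab
  have hderiv : HasDerivAt ψ ⟪gradient f y, z - y⟫ 0 := by
    have := hasDerivAt_line hd y (z - y) 0
    simpa using this
  have hslope := hψconv.le_slope_of_hasDerivAt (Set.mem_univ (0:ℝ)) (Set.mem_univ (1:ℝ))
    (by norm_num) hderiv
  have hψ0 : ψ 0 = f y := by simp [hψ]
  have hψ1 : ψ 1 = f z := by simp [hψ]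
  rw [slope_def_field] at hslope
  simp [hψ0, hψ1] at hslope
  have hz := inner_gradient_eq_fderiv (hd y) z
  have hy := inner_gradient_eq_fderiv (hd y) y
  rw [inner_sub_right]
  linarith
  
/-- Key lemma: for an L-smooth convex function,
`‖∇f x − ∇f y‖² ≤ 2 L (f x − f y − ⟪∇f y, x − y⟫)`. -/
private lemma sq_norm_grad_sub_le {f : F → ℝ} (hc : ConvexOn ℝ Set.univ f)
    (hd : Differentiable ℝ f) {L : ℝ} (hL : 0 < L)
    (hlip : ∀ a b, ‖gradient f a - gradient f b‖ ≤ L * ‖a - b‖) (x y : F) :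
    ‖gradient f x - gradient f y‖ ^ 2 ≤ 2 * L * (f x - f y - ⟪gradient f y, x - y⟫) := by
  set u := gradient f x - gradient f y with hu
  have hdesc := descent_lemma hd hL hlip x ((-L⁻¹) • u)
  have hconv := convex_first_order hc hd y (x + (-L⁻¹) • u)
  have e1 : ⟪gradient f x, (-L⁻¹) • u⟫ = -L⁻¹ * ⟪gradient f x, u⟫ :=
    real_inner_smul_right _ _ _
  have e2 : ‖(-L⁻¹) • u‖ ^ 2 = L⁻¹ ^ 2 * ‖u‖ ^ 2 := by
    rw [norm_smul]
    rw [norm_neg, Real.norm_eq_abs, abs_inv, abs_of_pos hL]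
    ring
  have e3 : ⟪gradient f y, x + (-L⁻¹) • u - y⟫
      = ⟪gradient f y, x - y⟫ + (-L⁻¹) * ⟪gradient f y, u⟫ := by
    have : x + (-L⁻¹) • u - y = (x - y) + (-L⁻¹) • u := by abel
    rw [this, inner_add_right, real_inner_smul_right]
  have e4 : ⟪gradient f x, u⟫ - ⟪gradient f y, u⟫ = ‖u‖ ^ 2 := by
    rw [← inner_sub_left, ← hu, real_inner_self_eq_norm_sq]
  rw [e1, e2] at hdesc
  rw [e3] at hconv
  have hL' : (0:ℝ) < L⁻¹ := inv_pos.mpr hL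
  have e4' : L⁻¹ * ⟪gradient f x, u⟫ - L⁻¹ * ⟪gradient f y, u⟫ = L⁻¹ * ‖u‖ ^ 2 := by
    rw [← mul_sub, e4]
  have heq : L / 2 * (L⁻¹ ^ 2 * ‖u‖ ^ 2) = L⁻¹ / 2 * ‖u‖ ^ 2 := by
    field_simp
  have step2 : L⁻¹ / 2 * ‖u‖ ^ 2 ≤ f x - f y - ⟪gradient f y, x - y⟫ := by
    nlinarith [hconv.trans hdesc, e4', heq]
  calc ‖u‖ ^ 2 = 2 * L * (L⁻¹ / 2 * ‖u‖ ^ 2) := by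
        field_simp
    _ ≤ 2 * L * (f x - f y - ⟪gradient f y, x - y⟫) := by
        apply mul_le_mul_of_nonneg_left step2 (by positivity)

end Helpers

/-- Bregman divergence of a differentiable function `f` on `ℝ^d`. -/
noncomputable def bregman {d : ℕ} (f : EuclideanSpace ℝ (Fin d) → ℝ)
    (x y : EuclideanSpace ℝ (Fin d)) : ℝ :=
  f x - f y - ⟪gradient f y, x - y⟫

theorem svrg_second_moment_bound {d K : ℕ} (hK : 0 < K)
    (fk : Fin K → EuclideanSpace ℝ (Fin d) → ℝ) (L : ℝ) (hL : 0 < L)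
    (hconv : ∀ k, ConvexOn ℝ Set.univ (fk k))
    (hdiff : ∀ k, Differentiable ℝ (fk k))
    (hlip : ∀ k, ∀ x y, ‖gradient (fk k) x - gradient (fk k) y‖ ≤ L * ‖x - y‖)
    (f : EuclideanSpace ℝ (Fin d) → ℝ)
    (hf : f = fun x => (1 / (K : ℝ)) * ∑ k : Fin K, fk k x)
    (xstar : EuclideanSpace ℝ (Fin d)) :
    ∀ x xt : EuclideanSpace ℝ (Fin d),
      (1 / (K : ℝ)) * ∑ k : Fin K,
          ‖gradient (fk k) x - gradient (fk k) xt + gradient f xt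
              - gradient f xstar‖ ^ 2
        ≤ 4 * L * bregman f x xstar + 4 * L * bregman f xt xstar := by
  intro x xt
  have hKR : (0:ℝ) < (K:ℝ) := by exact_mod_cast hK
  -- gradient of f
  have hgrad : ∀ p : EuclideanSpace ℝ (Fin d), gradient f p = (1 / (K:ℝ)) • ∑ k : Fin K, gradient (fk k) p := by
    intro p
    have hk : ∀ k : Fin K, HasFDerivAt (fk k)
        (InnerProductSpace.toDual ℝ (EuclideanSpace ℝ (Fin d)) (gradient (fk k) p)) p :=
      fun k => hasGradientAt_iff_hasFDerivAt.mp ((hdiff k p).hasGradientAt)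
    have hsum : HasFDerivAt (fun x => ∑ k : Fin K, fk k x)
        (∑ k : Fin K, InnerProductSpace.toDual ℝ (EuclideanSpace ℝ (Fin d)) (gradient (fk k) p)) p :=
      HasFDerivAt.fun_sum (fun k _ => hk k)
    have hmul := hsum.const_mul (1 / (K:ℝ))
    have hgf : HasGradientAt f ((1 / (K:ℝ)) • ∑ k : Fin K, gradient (fk k) p) p := by
      rw [hasGradientAt_iff_hasFDerivAt, map_smul, map_sum]
      rw [hf]
      exact hmul
    exact hgf.gradient
  -- bregman decomposition
  have hbreg : ∀ u w : EuclideanSpace ℝ (Fin d), bregman f u w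
      = (1 / (K:ℝ)) * ∑ k : Fin K,
          (fk k u - fk k w - ⟪gradient (fk k) w, u - w⟫) := by
    intro u w
    rw [bregman, hgrad w, real_inner_smul_left, sum_inner, hf]
    simp only [Finset.sum_sub_distrib, mul_sub]
  -- abbreviations
  set a : Fin K → EuclideanSpace ℝ (Fin d) := fun k => gradient (fk k) x - gradient (fk k) xstar with ha
  set b : Fin K → EuclideanSpace ℝ (Fin d) := fun k => gradient (fk k) xt - gradient (fk k) xstar with hb
  set m : EuclideanSpace ℝ (Fin d) := gradient f xt - gradient f xstar with hm
  have hmb : m = (1 / (K:ℝ)) • ∑ k : Fin K, b k := by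
    rw [hm, hgrad xt, hgrad xstar, ← smul_sub, ← Finset.sum_sub_distrib]
  -- pointwise bound
  have hpt : ∀ k : Fin K,
      ‖gradient (fk k) x - gradient (fk k) xt + gradient f xt - gradient f xstar‖ ^ 2
        ≤ 2 * ‖a k‖ ^ 2 + 2 * ‖b k - m‖ ^ 2 := by
    intro k
    have heq : gradient (fk k) x - gradient (fk k) xt + gradient f xt - gradient f xstar
        = a k - (b k - m) := by
      rw [ha, hb, hm]; beta_reduce; abel
    rw [heq]
    have h1 := norm_sub_le (a k) (b k - m)
    have h2 : ‖a k - (b k - m)‖ ^ 2 ≤ (‖a k‖ + ‖b k - m‖) ^ 2 :=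
      pow_le_pow_left₀ (norm_nonneg _) h1 2
    nlinarith [h2, sq_nonneg (‖a k‖ - ‖b k - m‖)]
  -- variance bound
  have hvar : ∑ k : Fin K, ‖b k - m‖ ^ 2 ≤ ∑ k : Fin K, ‖b k‖ ^ 2 := by
    have hS : ∑ k : Fin K, b k = (K:ℝ) • m := by
      rw [hmb, smul_smul]
      rw [mul_one_div, div_self hKR.ne', one_smul]
    have expand : ∑ k : Fin K, ‖b k - m‖ ^ 2
        = ∑ k : Fin K, ‖b k‖ ^ 2 - 2 * ((K:ℝ) * ‖m‖ ^ 2) + (K:ℝ) * ‖m‖ ^ 2 := by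
      have : ∀ k : Fin K, ‖b k - m‖ ^ 2 = ‖b k‖ ^ 2 - 2 * ⟪b k, m⟫ + ‖m‖ ^ 2 :=
        fun k => norm_sub_sq_real _ _
      rw [Finset.sum_congr rfl (fun k _ => this k)]
      rw [Finset.sum_add_distrib, Finset.sum_sub_distrib, ← Finset.mul_sum,
        ← sum_inner, hS, real_inner_smul_left, real_inner_self_eq_norm_sq]
      simp [Finset.card_univ]
      try ring
    rw [expand]
    nlinarith [norm_nonneg m, sq_nonneg ‖m‖, hKR]
  -- per-component smoothness bounds
  have hA : ∑ k : Fin K, ‖a k‖ ^ 2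
      ≤ 2 * L * ∑ k : Fin K, (fk k x - fk k xstar - ⟪gradient (fk k) xstar, x - xstar⟫) := by
    rw [Finset.mul_sum]
    exact Finset.sum_le_sum fun k _ =>
      sq_norm_grad_sub_le (hconv k) (hdiff k) hL (hlip k) x xstar
  have hB : ∑ k : Fin K, ‖b k‖ ^ 2
      ≤ 2 * L * ∑ k : Fin K, (fk k xt - fk k xstar - ⟪gradient (fk k) xstar, xt - xstar⟫) := by
    rw [Finset.mul_sum]
    exact Finset.sum_le_sum fun k _ =>
      sq_norm_grad_sub_le (hconv k) (hdiff k) hL (hlip k) xt xstar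
  -- combine
  have hsum1 : ∑ k : Fin K,
      ‖gradient (fk k) x - gradient (fk k) xt + gradient f xt - gradient f xstar‖ ^ 2
      ≤ 2 * ∑ k : Fin K, ‖a k‖ ^ 2 + 2 * ∑ k : Fin K, ‖b k‖ ^ 2 := by
    calc _ ≤ ∑ k : Fin K, (2 * ‖a k‖ ^ 2 + 2 * ‖b k - m‖ ^ 2) :=
            Finset.sum_le_sum fun k _ => hpt k
      _ = 2 * ∑ k : Fin K, ‖a k‖ ^ 2 + 2 * ∑ k : Fin K, ‖b k - m‖ ^ 2 := by
            rw [Finset.sum_add_distrib, Finset.mul_sum, Finset.mul_sum]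
      _ ≤ _ := by linarith
  have hbx := hbreg x xstar
  have hbt := hbreg xt xstar
  have h1K : (0:ℝ) < 1 / (K:ℝ) := by positivity
  calc (1 / (K : ℝ)) * ∑ k : Fin K,
          ‖gradient (fk k) x - gradient (fk k) xt + gradient f xt - gradient f xstar‖ ^ 2
      ≤ (1 / (K:ℝ)) * (2 * ∑ k : Fin K, ‖a k‖ ^ 2 + 2 * ∑ k : Fin K, ‖b k‖ ^ 2) :=
        by apply mul_le_mul_of_nonneg_left hsum1 h1K.le
    _ ≤ (1 / (K:ℝ)) * (2 * (2 * L * ∑ k : Fin K,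
            (fk k x - fk k xstar - ⟪gradient (fk k) xstar, x - xstar⟫))
          + 2 * (2 * L * ∑ k : Fin K,
            (fk k xt - fk k xstar - ⟪gradient (fk k) xstar, xt - xstar⟫))) := by
        apply mul_le_mul_of_nonneg_left _ h1K.le
        linarith
    _ = 4 * L * bregman f x xstar + 4 * L * bregman f xt xstar := by
        rw [hbx, hbt]; ring
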